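/- arXiv:2208.02416 — 2 statements merged into one kernel-verified Lean document; each statement's English description precedes it below -/
import Mathlib

section
/- Let X = {x_1,...,x_{2n}} ⊂ Z^d with d ≥ 1, and let (m_{jk})_{1≤j,k≤2n} satisfy |m_{jk}| ≤ C e^{−μ|x_j − x_k|} for constants C, μ > 0. Then (1/n!) · sum_{π ∈ S_{2n}} ∏_{j=1}^n |m_{π(2j-1), π(2j)}| ≤ C_{d,μ}^n · exp(−(μ/(2√d)) D_s(X)), where D_s(X) = min_{π ∈ S_{2n}} sum_{j=1}^n |x_{π(2j-1)} − x_{π(2j)}| and C_{d,μ} depends only on d and μ. -/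
open Finset

noncomputable def ed {d : ℕ} (x y : Fin d → ℤ) : ℝ :=
  Real.sqrt (∑ i, ((x i : ℝ) - (y i : ℝ)) ^ 2)

noncomputable def DsX {d n : ℕ} (x : Fin (2 * n) → Fin d → ℤ) : ℝ :=
  Finset.univ.inf' Finset.univ_nonempty fun π : Equiv.Perm (Fin (2 * n)) =>
    ∑ j : Fin n, ed (x (π ⟨2 * j.1, by have := j.2; omega⟩))
      (x (π ⟨2 * j.1 + 1, by have := j.2; omega⟩))

lemma geom_range_le {r : ℝ} (hr0 : 0 ≤ r) (hr1 : r < 1) (R : ℕ) :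
    ∑ k ∈ Finset.range R, r ^ k ≤ 1 / (1 - r) := by
  have h1 : (0:ℝ) < 1 - r := by linarith
  rw [geom_sum_eq (by intro h; rw [h] at hr1; linarith) R]
  have h2 : (r ^ R - 1) / (r - 1) = (1 - r ^ R) / (1 - r) := by
    rw [← neg_div_neg_eq]; ring_nf
  rw [h2]
  have h3 : (1:ℝ) - r ^ R ≤ 1 := by
    have : (0:ℝ) ≤ r ^ R := pow_nonneg hr0 R
    linarith
  exact div_le_div_of_nonneg_right h3 h1.le

lemma abs_geom_sum {r : ℝ} (hr0 : 0 ≤ r) (hr1 : r < 1) (R : ℕ) :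
    ∑ t ∈ Finset.Icc (-(R:ℤ)) R, r ^ t.natAbs ≤ 2 / (1 - r) := by
  have key : ∀ A : Finset ℤ, A ⊆ Finset.Icc (-(R:ℤ)) R →
      (∀ a ∈ A, ∀ b ∈ A, a.natAbs = b.natAbs → a = b) →
      ∑ t ∈ A, r ^ t.natAbs ≤ ∑ k ∈ Finset.range (R+1), r ^ k := by
    intro A hA hinj
    rw [← Finset.sum_image (g := Int.natAbs) (f := fun k => r ^ k) hinj]
    apply Finset.sum_le_sum_of_subset_of_nonneg
    · intro k hk
      simp only [Finset.mem_image] at hk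
      obtain ⟨t, ht, rfl⟩ := hk
      have := hA ht
      simp only [Finset.mem_Icc] at this
      simp only [Finset.mem_range]
      omega
    · intro k _ _; exact pow_nonneg hr0 k
  have hsplit := Finset.sum_filter_add_sum_filter_not (Finset.Icc (-(R:ℤ)) R)
    (fun t => 0 ≤ t) (fun t => r ^ t.natAbs)
  have h1 : ∑ t ∈ (Finset.Icc (-(R:ℤ)) R).filter (fun t => 0 ≤ t), r ^ t.natAbs
      ≤ ∑ k ∈ Finset.range (R+1), r ^ k := by
    apply key _ (Finset.filter_subset _ _)
    intro a ha b hb hab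
    simp only [Finset.mem_filter] at ha hb
    omega
  have h2 : ∑ t ∈ (Finset.Icc (-(R:ℤ)) R).filter (fun t => ¬ 0 ≤ t), r ^ t.natAbs
      ≤ ∑ k ∈ Finset.range (R+1), r ^ k := by
    apply key _ (Finset.filter_subset _ _)
    intro a ha b hb hab
    simp only [Finset.mem_filter] at ha hb
    omega
  have h3 := geom_range_le hr0 hr1 (R+1)
  have : (2:ℝ) / (1 - r) = 1/(1-r) + 1/(1-r) := by ring
  rw [this]
  calc ∑ t ∈ Finset.Icc (-(R:ℤ)) R, r ^ t.natAbs
      = _ + _ := hsplit.symm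
    _ ≤ _ := add_le_add (h1.trans h3) (h2.trans h3)

lemma coord_sum_le_ed {d : ℕ} (x y : Fin d → ℤ) :
    ∑ i, ((x i - y i).natAbs : ℝ) ≤ d * ed x y := by
  have h : ∀ i, ((x i - y i).natAbs : ℝ) ≤ ed x y := by
    intro i
    unfold ed
    rw [show (((x i - y i).natAbs : ℝ)) = Real.sqrt ((((x i:ℝ)) - (y i:ℝ))^2) by
      rw [Real.sqrt_sq_eq_abs, Nat.cast_natAbs]
      push_cast; ring_nf]
    apply Real.sqrt_le_sqrt
    apply Finset.single_le_sum (f := fun i => ((x i:ℝ) - (y i:ℝ))^2)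
      (fun i _ => sq_nonneg _) (Finset.mem_univ i)
  calc ∑ i, ((x i - y i).natAbs : ℝ) ≤ ∑ _i : Fin d, ed x y :=
        Finset.sum_le_sum (fun i _ => h i)
    _ = d * ed x y := by rw [Finset.sum_const, Finset.card_univ, Fintype.card_fin,
        nsmul_eq_mul]

lemma pow_self_le_exp_pow_factorial (n : ℕ) :
    (n:ℝ)^n ≤ Real.exp 1 ^ n * n.factorial := by
  have h0 : (0:ℝ) < n.factorial := by exact_mod_cast n.factorial_pos
  have h1 : (n:ℝ)^n / n.factorial ≤ Real.exp n := by
    refine le_trans ?_ (Real.sum_le_exp_of_nonneg (n.cast_nonneg) (n+1))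
    exact Finset.single_le_sum (f := fun i => (n:ℝ)^i / i.factorial)
      (fun i _ => by positivity) (Finset.mem_range.mpr (Nat.lt_succ_self n))
  have h2 : Real.exp (n:ℝ) = Real.exp 1 ^ n := by
    rw [← Real.exp_nat_mul, mul_one]
  rw [div_le_iff₀ h0] at h1
  rw [← h2]; exact h1
lemma row_sum_le {d n : ℕ} (hd : 1 ≤ d) {μ : ℝ} (hμ : 0 < μ)
    (x : Fin (2*n) → Fin d → ℤ) (hx : Function.Injective x) (p : Fin (2*n)) :
    ∑ q, Real.exp (-(μ/2) * ed (x p) (x q))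
      ≤ (2 / (1 - Real.exp (-(μ/(2*(d:ℝ))))))^d := by
  classical
  have hd0 : (0:ℝ) < d := by
    have : 0 < d := hd
    exact_mod_cast this
  set r := Real.exp (-(μ/(2*(d:ℝ)))) with hrdef
  have hr0 : 0 < r := Real.exp_pos _
  have hr1 : r < 1 := Real.exp_lt_one_iff.mpr (by
    have : 0 < μ/(2*(d:ℝ)) := by positivity
    linarith)
  set R : ℕ := Finset.univ.sup (fun q : Fin (2*n) =>
    Finset.univ.sup (fun i : Fin d => (x p i - x q i).natAbs)) with hRdef
  have hpt : ∀ q, Real.exp (-(μ/2) * ed (x p) (x q)) ≤ ∏ i, r ^ ((x p i - x q i).natAbs) := by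
    intro q
    have h1 := coord_sum_le_ed (x p) (x q)
    have h2 : ∏ i, r ^ ((x p i - x q i).natAbs)
        = Real.exp (∑ i, (((x p i - x q i).natAbs : ℝ)) * (-(μ/(2*(d:ℝ))))) := by
      rw [Real.exp_sum]
      exact Finset.prod_congr rfl fun i _ => (Real.exp_nat_mul _ _).symm
    rw [h2]
    apply Real.exp_le_exp.mpr
    rw [← Finset.sum_mul]
    have hc : (0:ℝ) < μ/(2*(d:ℝ)) := by positivity
    have hmul := mul_le_mul_of_nonneg_left h1 hc.le
    have heq : μ/(2*(d:ℝ)) * ((d:ℝ) * ed (x p) (x q)) = μ/2 * ed (x p) (x q) := by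
      field_simp
    nlinarith [hmul, heq]
  have himg : Function.Injective (fun q : Fin (2*n) => (fun i => x p i - x q i : Fin d → ℤ)) := by
    intro a b hab
    apply hx
    funext i
    have := congrFun hab i
    simp only at this
    omega
  calc ∑ q, Real.exp (-(μ/2) * ed (x p) (x q))
      ≤ ∑ q, ∏ i, r ^ ((x p i - x q i).natAbs) := Finset.sum_le_sum fun q _ => hpt q
    _ = ∑ z ∈ Finset.univ.image (fun q : Fin (2*n) => (fun i => x p i - x q i : Fin d → ℤ)),
          ∏ i, r ^ ((z i).natAbs) :=
        (Finset.sum_image (g := fun q : Fin (2*n) => (fun i => x p i - x q i : Fin d → ℤ))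
          (f := fun z : Fin d → ℤ => ∏ i, r ^ ((z i).natAbs))
          (fun a _ b _ h => himg h)).symm
    _ ≤ ∑ z ∈ Fintype.piFinset (fun _ : Fin d => Finset.Icc (-(R:ℤ)) (R:ℤ)),
          ∏ i, r ^ ((z i).natAbs) := by
        apply Finset.sum_le_sum_of_subset_of_nonneg
        · intro z hz
          simp only [Finset.mem_image] at hz
          obtain ⟨q, _, rfl⟩ := hz
          rw [Fintype.mem_piFinset]
          intro i
          rw [Finset.mem_Icc]
          have hle : (x p i - x q i).natAbs ≤ R := by
            calc (x p i - x q i).natAbs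
                ≤ Finset.univ.sup (fun i : Fin d => (x p i - x q i).natAbs) :=
                  Finset.le_sup (f := fun i : Fin d => (x p i - x q i).natAbs)
                    (Finset.mem_univ i)
              _ ≤ R := by
                  rw [hRdef]
                  exact Finset.le_sup (f := fun q : Fin (2*n) =>
                    Finset.univ.sup (fun i : Fin d => (x p i - x q i).natAbs))
                    (Finset.mem_univ q)
          omega
        · intro z _ _
          exact Finset.prod_nonneg fun i _ => pow_nonneg hr0.le _
    _ = ∏ _i : Fin d, ∑ t ∈ Finset.Icc (-(R:ℤ)) (R:ℤ), r ^ t.natAbs :=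
        (Finset.prod_univ_sum (fun _ : Fin d => Finset.Icc (-(R:ℤ)) (R:ℤ))
          (fun _ t => r ^ t.natAbs)).symm
    _ ≤ ∏ _i : Fin d, (2/(1-r)) :=
        Finset.prod_le_prod (fun i _ => Finset.sum_nonneg fun t _ => pow_nonneg hr0.le _)
          (fun i _ => abs_geom_sum hr0.le hr1 R)
    _ = (2/(1-r))^d := by rw [Finset.prod_const, Finset.card_univ, Fintype.card_fin]


lemma stepA {d n : ℕ} {μ C : ℝ} (hμ : 0 < μ) (hC : 0 ≤ C)
    (x : Fin (2*n) → Fin d → ℤ) (m : Matrix (Fin (2*n)) (Fin (2*n)) ℂ)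
    (hm : ∀ j k, ‖m j k‖ ≤ C * Real.exp (-μ * ed (x j) (x k)))
    (D : ℝ) (a b : Fin n → Fin (2*n))
    (hD : D ≤ ∑ j, ed (x (a j)) (x (b j))) :
    ∏ j, ‖m (a j) (b j)‖ ≤
      C^n * Real.exp (-(μ/2) * D) * ∏ j, Real.exp (-(μ/2) * ed (x (a j)) (x (b j))) := by
  calc ∏ j, ‖m (a j) (b j)‖
      ≤ ∏ j, (C * Real.exp (-μ * ed (x (a j)) (x (b j)))) :=
        Finset.prod_le_prod (fun j _ => norm_nonneg _) (fun j _ => hm _ _)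
    _ = C^n * ∏ j, Real.exp (-μ * ed (x (a j)) (x (b j))) := by
        rw [Finset.prod_mul_distrib, Finset.prod_const, Finset.card_univ, Fintype.card_fin]
    _ = C^n * Real.exp (-μ * ∑ j, ed (x (a j)) (x (b j))) := by
        rw [← Real.exp_sum]
        congr 1
        rw [Finset.mul_sum]
    _ ≤ C^n * (Real.exp (-(μ/2) * D) * Real.exp (-(μ/2) * ∑ j, ed (x (a j)) (x (b j)))) := by
        apply mul_le_mul_of_nonneg_left _ (pow_nonneg hC n)
        rw [← Real.exp_add]
        apply Real.exp_le_exp.mpr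
        have := mul_le_mul_of_nonneg_left hD hμ.le
        linarith
    _ = C^n * Real.exp (-(μ/2) * D) * ∏ j, Real.exp (-(μ/2) * ed (x (a j)) (x (b j))) := by
        rw [← Real.exp_sum, ← mul_assoc]
        congr 2
        rw [Finset.mul_sum]

lemma stepB {n : ℕ} (E : Fin (2*n) → Fin (2*n) → ℝ) (hE0 : ∀ p q, 0 ≤ E p q) :
    ∑ π : Equiv.Perm (Fin (2*n)), ∏ j : Fin n,
        E (π ⟨2*j.1, by have := j.2; omega⟩) (π ⟨2*j.1+1, by have := j.2; omega⟩)
      ≤ (∑ p, ∑ q, E p q)^n := by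
  classical
  set Φ : Equiv.Perm (Fin (2*n)) → (Fin n → Fin (2*n) × Fin (2*n)) :=
    fun π j => (π ⟨2*j.1, by have := j.2; omega⟩, π ⟨2*j.1+1, by have := j.2; omega⟩) with hΦ
  have hinj : Function.Injective Φ := by
    intro π π' h
    apply Equiv.ext
    intro k
    have hk2 : k.1 < 2*n := k.2
    have hj : k.1/2 < n := by omega
    have h2 := congrFun h ⟨k.1/2, hj⟩
    simp only [hΦ, Prod.mk.injEq] at h2
    rcases Nat.lt_or_ge (k.1 % 2) 1 with hpar | hpar
    · have hk : k = (⟨2*(k.1/2), by omega⟩ : Fin (2*n)) := Fin.ext (by simp; omega)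
      rw [hk]; exact h2.1
    · have hk : k = (⟨2*(k.1/2)+1, by omega⟩ : Fin (2*n)) := Fin.ext (by simp; omega)
      rw [hk]; exact h2.2
  have e1 : ∑ π : Equiv.Perm (Fin (2*n)), ∏ j : Fin n,
        E (π ⟨2*j.1, by have := j.2; omega⟩) (π ⟨2*j.1+1, by have := j.2; omega⟩)
      = ∑ c ∈ Finset.univ.image Φ, ∏ j : Fin n, E (c j).1 (c j).2 :=
    (Finset.sum_image (g := Φ) (f := fun c => ∏ j : Fin n, E (c j).1 (c j).2)
      (fun a _ b _ h => hinj h)).symm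
  rw [e1]
  have e2 : ∑ c ∈ Finset.univ.image Φ, ∏ j : Fin n, E (c j).1 (c j).2
      ≤ ∑ c : Fin n → Fin (2*n) × Fin (2*n), ∏ j : Fin n, E (c j).1 (c j).2 :=
    Finset.sum_le_sum_of_subset_of_nonneg (Finset.subset_univ _)
      (fun c _ _ => Finset.prod_nonneg fun j _ => hE0 _ _)
  have e3 : ∑ c ∈ Fintype.piFinset (fun _ : Fin n => (Finset.univ : Finset (Fin (2*n) × Fin (2*n)))),
        ∏ j : Fin n, E (c j).1 (c j).2
      = ∏ _j : Fin n, ∑ pq : Fin (2*n) × Fin (2*n), E pq.1 pq.2 :=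
    (Finset.prod_univ_sum (fun _ : Fin n => (Finset.univ : Finset (Fin (2*n) × Fin (2*n))))
      (fun _ pq => E pq.1 pq.2)).symm
  rw [Fintype.piFinset_univ] at e3
  refine e2.trans (le_of_eq ?_)
  rw [e3, Finset.prod_const, Finset.card_univ, Fintype.card_fin, Fintype.sum_prod_type]

theorem pairing_sum_bound {d : ℕ} (hd : 1 ≤ d) (μ C : ℝ) (hμ : 0 < μ) (hC : 0 < C) :
    ∃ C' : ℝ, 0 < C' ∧ ∀ (n : ℕ) (x : Fin (2 * n) → Fin d → ℤ),
      Function.Injective x →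
      ∀ m : Matrix (Fin (2 * n)) (Fin (2 * n)) ℂ,
      (∀ j k, ‖m j k‖ ≤ C * Real.exp (-μ * ed (x j) (x k))) →
      (1 / (n.factorial : ℝ)) * ∑ π : Equiv.Perm (Fin (2 * n)),
        ∏ j : Fin n, ‖m (π ⟨2 * j.1, by have := j.2; omega⟩)
          (π ⟨2 * j.1 + 1, by have := j.2; omega⟩)‖ ≤
      C' ^ n * Real.exp (-(μ / (2 * Real.sqrt d)) * DsX x) := by
  classical
  have hd0 : (0:ℝ) < d := by
    have : 0 < d := hd
    exact_mod_cast this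
  set r := Real.exp (-(μ/(2*(d:ℝ)))) with hrdef
  have hr0 : 0 < r := Real.exp_pos _
  have hr1 : r < 1 := Real.exp_lt_one_iff.mpr (by
    have : 0 < μ/(2*(d:ℝ)) := by positivity
    linarith)
  have h1r : (0:ℝ) < 1 - r := by linarith
  set K := (2/(1-r))^d with hKdef
  have hK0 : 0 < K := pow_pos (by positivity) d
  refine ⟨2 * Real.exp 1 * K * C, by positivity, ?_⟩
  intro n x hx m hm
  have hDle : ∀ π : Equiv.Perm (Fin (2*n)), DsX x ≤ ∑ j : Fin n,
      ed (x (π ⟨2*j.1, by have := j.2; omega⟩)) (x (π ⟨2*j.1+1, by have := j.2; omega⟩)) :=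
    fun π => Finset.inf'_le _ (Finset.mem_univ π)
  have hD0 : 0 ≤ DsX x :=
    Finset.le_inf' _ _ fun π _ => Finset.sum_nonneg fun j _ => Real.sqrt_nonneg _
  have hA : ∀ π : Equiv.Perm (Fin (2*n)),
      (∏ j : Fin n, ‖m (π ⟨2*j.1, by have := j.2; omega⟩)
          (π ⟨2*j.1+1, by have := j.2; omega⟩)‖)
      ≤ C^n * Real.exp (-(μ/2) * DsX x) * ∏ j : Fin n,
          Real.exp (-(μ/2) * ed (x (π ⟨2*j.1, by have := j.2; omega⟩))
            (x (π ⟨2*j.1+1, by have := j.2; omega⟩))) :=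
    fun π => stepA hμ hC.le x m hm (DsX x)
      (fun j => π ⟨2*j.1, by have := j.2; omega⟩)
      (fun j => π ⟨2*j.1+1, by have := j.2; omega⟩) (hDle π)
  have hrow : ∀ p : Fin (2*n), ∑ q, Real.exp (-(μ/2) * ed (x p) (x q)) ≤ K :=
    fun p => row_sum_le hd hμ x hx p
  have hsum : ∑ p : Fin (2*n), ∑ q : Fin (2*n), Real.exp (-(μ/2) * ed (x p) (x q))
      ≤ (2*(n:ℝ)) * K := by
    calc ∑ p : Fin (2*n), ∑ q : Fin (2*n), Real.exp (-(μ/2) * ed (x p) (x q))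
        ≤ ∑ _p : Fin (2*n), K := Finset.sum_le_sum fun p _ => hrow p
      _ = (2*(n:ℝ)) * K := by
          rw [Finset.sum_const, Finset.card_univ, Fintype.card_fin, nsmul_eq_mul]
          push_cast; ring
  have hsum0 : 0 ≤ ∑ p : Fin (2*n), ∑ q : Fin (2*n), Real.exp (-(μ/2) * ed (x p) (x q)) :=
    Finset.sum_nonneg fun p _ => Finset.sum_nonneg fun q _ => (Real.exp_pos _).le
  have hB : ∑ π : Equiv.Perm (Fin (2*n)), ∏ j : Fin n,
        Real.exp (-(μ/2) * ed (x (π ⟨2*j.1, by have := j.2; omega⟩))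
          (x (π ⟨2*j.1+1, by have := j.2; omega⟩)))
      ≤ ((2*(n:ℝ))*K)^n := by
    refine le_trans ?_ (pow_le_pow_left₀ hsum0 hsum n)
    exact stepB (fun p q => Real.exp (-(μ/2) * ed (x p) (x q)))
      (fun p q => (Real.exp_pos _).le)
  have hfac : (0:ℝ) < n.factorial := by exact_mod_cast n.factorial_pos
  have hX : Real.exp (-(μ/2) * DsX x) ≤ Real.exp (-(μ/(2*Real.sqrt d)) * DsX x) := by
    apply Real.exp_le_exp.mpr
    have hs : 1 ≤ Real.sqrt d := Real.one_le_sqrt.mpr (by exact_mod_cast hd)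
    have hdiv : μ/(2*Real.sqrt d) ≤ μ/2 :=
      div_le_div_of_nonneg_left hμ.le two_pos (by linarith)
    nlinarith [hD0, hdiv]
  calc (1 / (n.factorial : ℝ)) * ∑ π : Equiv.Perm (Fin (2 * n)),
        ∏ j : Fin n, ‖m (π ⟨2 * j.1, by have := j.2; omega⟩)
          (π ⟨2 * j.1 + 1, by have := j.2; omega⟩)‖
      ≤ (1 / (n.factorial : ℝ)) * ∑ π : Equiv.Perm (Fin (2 * n)),
          (C^n * Real.exp (-(μ/2) * DsX x) * ∏ j : Fin n,
            Real.exp (-(μ/2) * ed (x (π ⟨2*j.1, by have := j.2; omega⟩))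
              (x (π ⟨2*j.1+1, by have := j.2; omega⟩)))) := by
        apply mul_le_mul_of_nonneg_left (Finset.sum_le_sum fun π _ => hA π) (by positivity)
    _ = (1 / (n.factorial : ℝ)) * (C^n * Real.exp (-(μ/2) * DsX x) *
          ∑ π : Equiv.Perm (Fin (2 * n)), ∏ j : Fin n,
            Real.exp (-(μ/2) * ed (x (π ⟨2*j.1, by have := j.2; omega⟩))
              (x (π ⟨2*j.1+1, by have := j.2; omega⟩)))) := by
        rw [← Finset.mul_sum]
    _ ≤ (1 / (n.factorial : ℝ)) * (C^n * Real.exp (-(μ/2) * DsX x) * ((2*(n:ℝ))*K)^n) := by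
        apply mul_le_mul_of_nonneg_left _ (by positivity)
        exact mul_le_mul_of_nonneg_left hB (by positivity)
    _ ≤ (2 * Real.exp 1 * K * C)^n * Real.exp (-(μ/2) * DsX x) := by
        have hnn := pow_self_le_exp_pow_factorial n
        have e1 : ((2*(n:ℝ))*K)^n = 2^n * (n:ℝ)^n * K^n := by
          rw [mul_pow, mul_pow]
        have e2 : (2 * Real.exp 1 * K * C)^n = 2^n * Real.exp 1 ^n * K^n * C^n := by
          rw [mul_pow, mul_pow, mul_pow]
        rw [e1, e2]
        rw [div_mul_eq_mul_div, one_mul, div_le_iff₀ hfac]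
        have hexp0 : (0:ℝ) ≤ Real.exp (-(μ/2) * DsX x) := (Real.exp_pos _).le
        calc C ^ n * Real.exp (-(μ/2) * DsX x) * (2 ^ n * (n:ℝ) ^ n * K ^ n)
            = (C ^ n * Real.exp (-(μ/2) * DsX x) * (2 ^ n * K ^ n)) * (n:ℝ)^n := by ring
          _ ≤ (C ^ n * Real.exp (-(μ/2) * DsX x) * (2 ^ n * K ^ n)) *
                (Real.exp 1 ^ n * n.factorial) := by
              apply mul_le_mul_of_nonneg_left hnn (by positivity)
          _ = 2 ^ n * Real.exp 1 ^ n * K ^ n * C ^ n *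
                Real.exp (-(μ/2) * DsX x) * n.factorial := by ring
    _ ≤ (2 * Real.exp 1 * K * C)^n * Real.exp (-(μ / (2 * Real.sqrt d)) * DsX x) := by
        apply mul_le_mul_of_nonneg_left hX (by positivity)
end

section
/- Let M be a 2n×2n skew-symmetric complex matrix with entries satisfying |m_{jk}| ≤ C e^{−μ|x_j − x_k|} for distinct points x_1,...,x_{2n} ∈ Z^d and constants C, μ > 0. Then the Pfaffian of M, defined as Pf(M) = (1/(2^n n!)) sum_{π ∈ S_{2n}} sgn(π) ∏_{j=1}^n m_{π(2j-1), π(2j)}, satisfies |Pf(M)| ≤ C_{d,μ}^n · exp(−(μ/(2√d)) D_s(X)), where D_s(X) = min_{π ∈ S_{2n}} sum_{j=1}^n |x_{π(2j-1)} − x_{π(2j)}|. -/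
open Finset

noncomputable def pfaffian {n : ℕ} (m : Matrix (Fin (2 * n)) (Fin (2 * n)) ℂ) : ℂ :=
  (1 / (2 ^ n * (n.factorial : ℂ))) * ∑ π : Equiv.Perm (Fin (2 * n)),
    ((Equiv.Perm.sign π : ℤ) : ℂ) * ∏ j : Fin n,
      m (π ⟨2 * j.1, by have := j.2; omega⟩) (π ⟨2 * j.1 + 1, by have := j.2; omega⟩)

/-! ### Auxiliary lemmas -/

lemma summable_exp_abs (c : ℝ) (hc : 0 < c) :
    Summable (fun t : ℤ => Real.exp (-c * |(t : ℝ)|)) := by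
  have hgeo : Summable (fun k : ℕ => Real.exp (-c) ^ k) :=
    summable_geometric_of_lt_one (Real.exp_nonneg _)
      (Real.exp_lt_one_iff.mpr (by linarith))
  apply Summable.of_nat_of_neg
  · refine hgeo.congr fun k => ?_
    rw [← Real.exp_nat_mul]
    push_cast
    rw [abs_of_nonneg (by positivity)]; ring_nf
  · refine hgeo.congr fun k => ?_
    rw [← Real.exp_nat_mul]
    push_cast; rw [abs_neg, abs_of_nonneg (by positivity)]; ring_nf

lemma summable_prod_exp (d : ℕ) (c : ℝ) (hc : 0 < c) :
    Summable (fun z : Fin d → ℤ => ∏ i, Real.exp (-c * |((z i : ℤ) : ℝ)|)) := by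
  induction d with
  | zero => exact .of_finite
  | succ d ih =>
    have h2 : Summable (fun p : ℤ × (Fin d → ℤ) =>
        Real.exp (-c * |(p.1 : ℝ)|) * ∏ i, Real.exp (-c * |((p.2 i : ℤ) : ℝ)|)) := by
      apply Summable.mul_of_nonneg (summable_exp_abs c hc) ih
      · exact fun _ => Real.exp_nonneg _
      · exact fun _ => Finset.prod_nonneg fun _ _ => Real.exp_nonneg _
    refine ((Fin.consEquiv (fun _ : Fin (d+1) => ℤ)).summable_iff).mp ?_
    refine h2.congr fun p => ?_
    simp [Function.comp, Fin.prod_univ_succ]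

lemma perm_sum_le {n : ℕ} (F : Fin (2*n) → Fin (2*n) → ℝ) (hF : ∀ a b, 0 ≤ F a b) :
    ∑ π : Equiv.Perm (Fin (2*n)), ∏ j : Fin n,
      F (π ⟨2*j.1, by have := j.2; omega⟩) (π ⟨2*j.1+1, by have := j.2; omega⟩)
    ≤ (∑ a, ∑ b, F a b) ^ n := by
  classical
  set G : (Fin n → Fin (2*n) × Fin (2*n)) → ℝ := fun h => ∏ j, F (h j).1 (h j).2 with hG
  have h0 : ∑ a, ∑ b, F a b = ∑ p : Fin (2*n) × Fin (2*n), F p.1 p.2 :=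
    (Fintype.sum_prod_type (f := fun p : Fin (2*n) × Fin (2*n) => F p.1 p.2)).symm
  have hrhs : (∑ a, ∑ b, F a b) ^ n = ∑ h : Fin n → Fin (2*n) × Fin (2*n), G h := by
    have h1 : (∑ p : Fin (2*n) × Fin (2*n), F p.1 p.2) ^ n
        = ∏ _j : Fin n, ∑ p : Fin (2*n) × Fin (2*n), F p.1 p.2 := by
      simp [Finset.prod_const]
    rw [h0, h1, Finset.prod_univ_sum, Fintype.piFinset_univ]
  set Φ : Equiv.Perm (Fin (2*n)) → (Fin n → Fin (2*n) × Fin (2*n)) := fun π j =>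
    (π ⟨2*j.1, by have := j.2; omega⟩, π ⟨2*j.1+1, by have := j.2; omega⟩) with hΦ
  have hinj : Function.Injective Φ := by
    intro π π' h
    ext k
    have hk := k.2
    have hj : k.1 / 2 < n := by omega
    have h2 := congrFun h ⟨k.1/2, hj⟩
    simp only [hΦ, Prod.mk.injEq] at h2
    rcases Nat.even_or_odd k.1 with he | ho
    · have hke : k = (⟨2*(k.1/2), by omega⟩ : Fin (2*n)) := by
        apply Fin.ext; simp only []; rcases he with ⟨t, ht⟩; omega
      rw [hke]
      exact congrArg Fin.val h2.1
    · have hko : k = (⟨2*(k.1/2)+1, by omega⟩ : Fin (2*n)) := by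
        apply Fin.ext; simp only []; rcases ho with ⟨t, ht⟩; omega
      rw [hko]
      exact congrArg Fin.val h2.2
  have hsum : ∑ π : Equiv.Perm (Fin (2*n)), ∏ j : Fin n,
      F (π ⟨2*j.1, by have := j.2; omega⟩) (π ⟨2*j.1+1, by have := j.2; omega⟩)
      = ∑ h ∈ Finset.univ.image Φ, G h := by
    rw [Finset.sum_image (fun a _ b _ hab => hinj hab)]
  rw [hsum, hrhs]
  exact Finset.sum_le_sum_of_subset_of_nonneg (Finset.subset_univ _)
    (fun h _ _ => Finset.prod_nonneg fun j _ => hF _ _)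

lemma ed_nonneg {d : ℕ} (x y : Fin d → ℤ) : 0 ≤ ed x y := Real.sqrt_nonneg _

lemma l1_le_ed {d : ℕ} (p q : Fin d → ℤ) :
    ∑ i, |(p i : ℝ) - (q i : ℝ)| ≤ d * ed p q := by
  have h : ∀ i : Fin d, |(p i : ℝ) - (q i : ℝ)| ≤ ed p q := by
    intro i
    rw [← Real.sqrt_sq_eq_abs]
    exact Real.sqrt_le_sqrt (Finset.single_le_sum
      (f := fun j => ((p j : ℝ) - (q j : ℝ)) ^ 2) (fun j _ => sq_nonneg _) (Finset.mem_univ i))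
  calc ∑ i, |(p i : ℝ) - (q i : ℝ)| ≤ ∑ _i : Fin d, ed p q :=
        Finset.sum_le_sum fun i _ => h i
    _ = d * ed p q := by simp [Finset.sum_const, nsmul_eq_mul]

lemma pow_le_exp_mul_factorial (n : ℕ) : (n : ℝ) ^ n ≤ Real.exp 1 ^ n * n.factorial := by
  have h := Real.pow_div_factorial_le_exp (x := (n : ℝ)) (Nat.cast_nonneg n) n
  have h2 : Real.exp (n : ℝ) = Real.exp 1 ^ n := by
    rw [← Real.exp_nat_mul]; ring_nf
  rw [div_le_iff₀ (by positivity)] at h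
  calc (n:ℝ)^n ≤ Real.exp n * n.factorial := h
    _ = Real.exp 1 ^ n * n.factorial := by rw [h2]

/-- Row-sum bound over distinct lattice points. -/
lemma row_sum_le_s11 {d N : ℕ} (c : ℝ) (hc : 0 < c) (x : Fin N → Fin d → ℤ)
    (hx : Function.Injective x) (a : Fin N) :
    ∑ b, ∏ i, Real.exp (-c * |(x a i : ℝ) - (x b i : ℝ)|)
      ≤ ∑' z : Fin d → ℤ, ∏ i, Real.exp (-c * |((z i : ℤ) : ℝ)|) := by
  classical
  set G : (Fin d → ℤ) → ℝ := fun z => ∏ i, Real.exp (-c * |((z i : ℤ) : ℝ)|) with hGdef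
  set ψ : Fin N → (Fin d → ℤ) := fun b i => x a i - x b i with hψ
  have hψinj : Function.Injective ψ := by
    intro b b' h
    apply hx
    funext i
    have := congrFun h i
    simp only [hψ] at this
    omega
  have heq : ∀ b, ∏ i, Real.exp (-c * |(x a i : ℝ) - (x b i : ℝ)|) = G (ψ b) := by
    intro b
    refine Finset.prod_congr rfl fun i _ => ?_
    simp only [hGdef, hψ]
    push_cast
    ring_nf
  calc ∑ b, ∏ i, Real.exp (-c * |(x a i : ℝ) - (x b i : ℝ)|)
      = ∑ b, G (ψ b) := Finset.sum_congr rfl fun b _ => heq b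
    _ = ∑ z ∈ Finset.univ.image ψ, G z :=
        (Finset.sum_image (fun a _ b _ hab => hψinj hab)).symm
    _ ≤ ∑' z : Fin d → ℤ, G z :=
        Summable.sum_le_tsum _ (fun z _ => Finset.prod_nonneg fun _ _ => Real.exp_nonneg _)
          (summable_prod_exp d c hc)

theorem pfaffian_bound {d : ℕ} (hd : 1 ≤ d) (μ C : ℝ) (hμ : 0 < μ) (hC : 0 < C) :
    ∃ C' : ℝ, 0 < C' ∧ ∀ (n : ℕ) (x : Fin (2 * n) → Fin d → ℤ),
      Function.Injective x →
      ∀ m : Matrix (Fin (2 * n)) (Fin (2 * n)) ℂ,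
      m.transpose = -m →
      (∀ j k, ‖m j k‖ ≤ C * Real.exp (-μ * ed (x j) (x k))) →
      ‖pfaffian m‖ ≤
        C' ^ n * Real.exp (-(μ / (2 * Real.sqrt d)) * DsX x) := by
  classical
  set c : ℝ := μ / (2 * d) with hcdef
  have hc : 0 < c := by
    apply div_pos hμ
    positivity
  set S : ℝ := ∑' z : Fin d → ℤ, ∏ i, Real.exp (-c * |((z i : ℤ) : ℝ)|) with hSdef
  have hS0 : 0 ≤ S := tsum_nonneg fun z => Finset.prod_nonneg fun _ _ => Real.exp_nonneg _
  refine ⟨2 * Real.exp 1 * C * S + 1, by positivity, ?_⟩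
  intro n x hx m _ hm
  set κ : ℝ := μ / (2 * Real.sqrt d) with hκdef
  have hsd : (1 : ℝ) ≤ Real.sqrt d := by
    rw [show (1:ℝ) = Real.sqrt 1 by simp]
    exact Real.sqrt_le_sqrt (by exact_mod_cast hd)
  have hκpos : 0 < κ := by
    apply div_pos hμ
    linarith
  -- the distance function F
  set F : Fin (2*n) → Fin (2*n) → ℝ := fun a b => Real.exp (-(μ/2) * ed (x a) (x b)) with hF
  have hFnn : ∀ a b, 0 ≤ F a b := fun a b => Real.exp_nonneg _
  -- DsX nonneg and its basic bound
  have hD0 : 0 ≤ DsX x := by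
    apply Finset.le_inf'
    intro π _
    exact Finset.sum_nonneg fun j _ => ed_nonneg _ _
  -- Step 1: bound for each permutation
  have step1 : ∀ π : Equiv.Perm (Fin (2*n)),
      ∏ j : Fin n, ‖m (π ⟨2 * j.1, by have := j.2; omega⟩)
        (π ⟨2 * j.1 + 1, by have := j.2; omega⟩)‖
      ≤ C ^ n * Real.exp (-κ * DsX x) *
        ∏ j : Fin n, F (π ⟨2 * j.1, by have := j.2; omega⟩)
          (π ⟨2 * j.1 + 1, by have := j.2; omega⟩) := by
    intro π
    set SE : ℝ := ∑ j : Fin n, ed (x (π ⟨2 * j.1, by have := j.2; omega⟩))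
      (x (π ⟨2 * j.1 + 1, by have := j.2; omega⟩)) with hSE
    have hSE0 : 0 ≤ SE := Finset.sum_nonneg fun j _ => ed_nonneg _ _
    have hDle : DsX x ≤ SE := Finset.inf'_le _ (Finset.mem_univ π)
    have h1 : ∏ j : Fin n, ‖m (π ⟨2 * j.1, by have := j.2; omega⟩)
        (π ⟨2 * j.1 + 1, by have := j.2; omega⟩)‖
        ≤ ∏ j : Fin n, (C * Real.exp (-μ * ed (x (π ⟨2 * j.1, by have := j.2; omega⟩))
            (x (π ⟨2 * j.1 + 1, by have := j.2; omega⟩)))) :=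
      Finset.prod_le_prod (fun j _ => norm_nonneg _) (fun j _ => hm _ _)
    have h2 : ∏ j : Fin n, (C * Real.exp (-μ * ed (x (π ⟨2 * j.1, by have := j.2; omega⟩))
            (x (π ⟨2 * j.1 + 1, by have := j.2; omega⟩))))
        = C ^ n * Real.exp (-μ * SE) := by
      rw [Finset.prod_mul_distrib, Finset.prod_const]
      simp only [Finset.card_univ, Fintype.card_fin]
      congr 1
      rw [← Real.exp_sum]
      congr 1
      rw [hSE, Finset.mul_sum]
    have h3 : Real.exp (-μ * SE) ≤ Real.exp (-κ * DsX x) * Real.exp (-(μ/2) * SE) := by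
      rw [← Real.exp_add]
      apply Real.exp_le_exp.mpr
      have hκμ : κ ≤ μ / 2 := by
        rw [hκdef]
        apply div_le_div_of_nonneg_left hμ.le (by linarith)
        linarith
      nlinarith [mul_le_mul_of_nonneg_left hDle (le_of_lt (show (0:ℝ) < μ/2 by linarith)),
        mul_le_mul_of_nonneg_right hκμ hD0]
    have h4 : Real.exp (-(μ/2) * SE) = ∏ j : Fin n,
        F (π ⟨2 * j.1, by have := j.2; omega⟩) (π ⟨2 * j.1 + 1, by have := j.2; omega⟩) := by
      rw [← Real.exp_sum]
      congr 1
      rw [hSE, Finset.mul_sum]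
    calc ∏ j : Fin n, ‖m (π ⟨2 * j.1, by have := j.2; omega⟩)
          (π ⟨2 * j.1 + 1, by have := j.2; omega⟩)‖
        ≤ C ^ n * Real.exp (-μ * SE) := h1.trans_eq h2
      _ ≤ C ^ n * (Real.exp (-κ * DsX x) * Real.exp (-(μ/2) * SE)) := by
          apply mul_le_mul_of_nonneg_left h3 (by positivity)
      _ = C ^ n * Real.exp (-κ * DsX x) *
          ∏ j : Fin n, F (π ⟨2 * j.1, by have := j.2; omega⟩)
            (π ⟨2 * j.1 + 1, by have := j.2; omega⟩) := by rw [h4]; ring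
  -- Step 2: bound the row sums of F
  have step2 : ∀ a, ∑ b, F a b ≤ S := by
    intro a
    have hFle : ∀ b, F a b ≤ ∏ i, Real.exp (-c * |(x a i : ℝ) - (x b i : ℝ)|) := by
      intro b
      rw [← Real.exp_sum]
      apply Real.exp_le_exp.mpr
      have hl1 := l1_le_ed (x a) (x b)
      have : ∑ i, -c * |(x a i : ℝ) - (x b i : ℝ)| = -c * ∑ i, |(x a i : ℝ) - (x b i : ℝ)| := by
        rw [Finset.mul_sum]
      rw [this]
      have hcd : c * (d : ℝ) = μ / 2 := by
        rw [hcdef]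
        field_simp
      rw [← hcd]
      nlinarith [mul_le_mul_of_nonneg_left hl1 hc.le]
    calc ∑ b, F a b ≤ ∑ b, ∏ i, Real.exp (-c * |(x a i : ℝ) - (x b i : ℝ)|) :=
          Finset.sum_le_sum fun b _ => hFle b
      _ ≤ S := row_sum_le_s11 c hc x hx a
  -- Step 3: total sum bound
  have step3 : ∑ π : Equiv.Perm (Fin (2*n)), ∏ j : Fin n,
      F (π ⟨2*j.1, by have := j.2; omega⟩) (π ⟨2*j.1+1, by have := j.2; omega⟩)
      ≤ (2 * n * S) ^ n := by
    refine (perm_sum_le F hFnn).trans ?_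
    apply pow_le_pow_left₀
    · exact Finset.sum_nonneg fun a _ => Finset.sum_nonneg fun b _ => hFnn a b
    calc ∑ a, ∑ b, F a b ≤ ∑ _a : Fin (2*n), S := Finset.sum_le_sum fun a _ => step2 a
      _ = 2 * n * S := by simp [Finset.sum_const, nsmul_eq_mul]; try push_cast; try ring
  -- Step 4: Pfaffian bound
  have habs : ‖pfaffian m‖ ≤ (1 / (2^n * n.factorial : ℝ)) *
      ∑ π : Equiv.Perm (Fin (2*n)), ∏ j : Fin n,
        ‖m (π ⟨2 * j.1, by have := j.2; omega⟩)
          (π ⟨2 * j.1 + 1, by have := j.2; omega⟩)‖ := by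
    rw [pfaffian, norm_mul]
    have h1 : ‖1 / (2 ^ n * (n.factorial : ℂ))‖ = 1 / (2^n * n.factorial : ℝ) := by
      rw [norm_div, norm_one, norm_mul, norm_pow]
      simp
    rw [h1]
    apply mul_le_mul_of_nonneg_left _ (by positivity)
    refine (norm_sum_le _ _).trans ?_
    apply Finset.sum_le_sum
    intro π _
    rw [norm_mul, norm_prod]
    have hs : ‖((Equiv.Perm.sign π : ℤ) : ℂ)‖ = 1 := by
      rcases Int.units_eq_one_or (Equiv.Perm.sign π) with h | h <;> rw [h] <;> simp
    rw [hs, one_mul]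
  -- combine
  have hcomb : (1 / (2^n * n.factorial : ℝ)) *
      ∑ π : Equiv.Perm (Fin (2*n)), ∏ j : Fin n,
        ‖m (π ⟨2 * j.1, by have := j.2; omega⟩)
          (π ⟨2 * j.1 + 1, by have := j.2; omega⟩)‖
      ≤ (1 / (2^n * n.factorial : ℝ)) * (C ^ n * Real.exp (-κ * DsX x) * (2 * n * S) ^ n) := by
    apply mul_le_mul_of_nonneg_left _ (by positivity)
    calc ∑ π : Equiv.Perm (Fin (2*n)), ∏ j : Fin n,
          ‖m (π ⟨2 * j.1, by have := j.2; omega⟩)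
            (π ⟨2 * j.1 + 1, by have := j.2; omega⟩)‖
        ≤ ∑ π : Equiv.Perm (Fin (2*n)), C ^ n * Real.exp (-κ * DsX x) *
            ∏ j : Fin n, F (π ⟨2 * j.1, by have := j.2; omega⟩)
              (π ⟨2 * j.1 + 1, by have := j.2; omega⟩) :=
          Finset.sum_le_sum fun π _ => step1 π
      _ = C ^ n * Real.exp (-κ * DsX x) * ∑ π : Equiv.Perm (Fin (2*n)),
            ∏ j : Fin n, F (π ⟨2 * j.1, by have := j.2; omega⟩)
              (π ⟨2 * j.1 + 1, by have := j.2; omega⟩) := by rw [← Finset.mul_sum]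
      _ ≤ C ^ n * Real.exp (-κ * DsX x) * (2 * n * S) ^ n := by
          apply mul_le_mul_of_nonneg_left step3 (by positivity)
      _ = C ^ n * Real.exp (-κ * DsX x) * (2 * n * S) ^ n := rfl
  -- final arithmetic
  have hfinal : (1 / (2^n * n.factorial : ℝ)) *
      (C ^ n * Real.exp (-κ * DsX x) * (2 * n * S) ^ n)
      ≤ (2 * Real.exp 1 * C * S + 1) ^ n * Real.exp (-κ * DsX x) := by
    have hkey : (1 / (2^n * n.factorial : ℝ)) * (C ^ n * (2 * n * S) ^ n)
        ≤ (2 * Real.exp 1 * C * S + 1) ^ n := by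
      have hnf : (0:ℝ) < n.factorial := by exact_mod_cast n.factorial_pos
      have e1 : ((2:ℝ) * n * S) ^ n = 2^n * (n:ℝ)^n * S^n := by ring
      have e2 : (n:ℝ)^n ≤ Real.exp 1 ^ n * n.factorial := pow_le_exp_mul_factorial n
      have h5 : (1 / (2^n * n.factorial : ℝ)) * (C ^ n * (2 * n * S) ^ n)
          = C^n * S^n * ((n:ℝ)^n / n.factorial) := by
        rw [e1]; field_simp
      rw [h5]
      have h6 : (n:ℝ)^n / n.factorial ≤ Real.exp 1 ^ n := by
        rw [div_le_iff₀ hnf]; exact e2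
      calc C^n * S^n * ((n:ℝ)^n / n.factorial) ≤ C^n * S^n * Real.exp 1 ^ n := by
            apply mul_le_mul_of_nonneg_left h6 (by positivity)
        _ = (C * S * Real.exp 1) ^ n := by rw [mul_pow, mul_pow]
        _ ≤ (2 * Real.exp 1 * C * S + 1) ^ n := by
            apply pow_le_pow_left₀ (by positivity)
            nlinarith [Real.exp_pos 1, hS0, hC, mul_pos hC (Real.exp_pos 1)]
    calc (1 / (2^n * n.factorial : ℝ)) * (C ^ n * Real.exp (-κ * DsX x) * (2 * n * S) ^ n)
        = ((1 / (2^n * n.factorial : ℝ)) * (C ^ n * (2 * n * S) ^ n)) *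
            Real.exp (-κ * DsX x) := by ring
      _ ≤ (2 * Real.exp 1 * C * S + 1) ^ n * Real.exp (-κ * DsX x) := by
          apply mul_le_mul_of_nonneg_right hkey (Real.exp_nonneg _)
  exact habs.trans (hcomb.trans hfinal)
end
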